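/- arXiv:1807.04144 — 4 statements merged into one kernel-verified Lean document; each statement's English description precedes it below -/
import Mathlib

section
/- Let L be the generator of an irreducible continuous-time Markov chain on a finite state space E with unique stationary measure π. Then L can be written as a finite sum L = Σ_{j=1}^p L_{c_j}, where each L_{c_j} is a cycle generator that is stationary with respect to π. -/
/-!
Weighting the rates by `π` turns stationarity into the statement that the flux
`π x R x y` is a circulation: at every state the inflow equals the outflow. A nonnegative
circulation on a finite state space is a finite sum of constant flows around cycles. Indeed,
positive inflow forces positive outflow, so following edges of positive flux one must close
a cycle, and subtracting the minimal flux along that cycle leaves a circulation with fewer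
positive edges. Dividing each cycle flow by `π` again yields the cycle generators, which are
stationary because a circulation pairs to zero with every gradient `f y - f x`.
-/

open Finset

/-- Generator of a continuous-time Markov chain with jump rates `R`. -/
def mcGen {E : Type*} [Fintype E] (R : E → E → ℝ) (f : E → ℝ) (η : E) : ℝ :=
  ∑ ξ, R η ξ * (f ξ - f η)

/-- `Q` is the rate matrix of a cycle generator: there is a cycle of distinct states
`e 0, …, e (m+1)` (of length at least two) and positive rates `r i`, such that `Q`
gives rate `r i` to the jump `e i → e (i+1)` and no other jumps. -/
def IsCycleRates {E : Type*} [DecidableEq E] (Q : E → E → ℝ) : Prop :=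
  ∃ (m : ℕ) (e : Fin (m + 2) → E) (r : Fin (m + 2) → ℝ),
    Function.Injective e ∧ (∀ i, 0 < r i) ∧
    ∀ x y : E, Q x y = ∑ i : Fin (m + 2), if x = e i ∧ y = e (i + 1) then r i else 0

open Function

theorem Function.exists_mem_periodicPts {α : Type*} [Finite α] [Nonempty α] (f : α → α) :
    ∃ x, x ∈ periodicPts f := by
  obtain ⟨a, b, hab, heq⟩ := Finite.exists_ne_map_eq_of_infinite (f^[·] (Classical.arbitrary α))
  wlog hlt : a < b generalizing a b
  · exact this b a hab.symm heq.symm (hab.lt_or_gt.resolve_left hlt)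
  refine ⟨f^[a] (Classical.arbitrary α), b - a, Nat.sub_pos_of_lt hlt, ?_⟩
  rw [IsPeriodicPt, IsFixedPt, ← iterate_add_apply, Nat.sub_add_cancel hlt.le, heq]

theorem Function.exists_injective_cycle {α : Type*} [Finite α] [Nonempty α] (f : α → α)
    (hf : ∀ x, f x ≠ x) :
    ∃ (m : ℕ) (e : Fin (m + 2) → α), Injective e ∧ ∀ i, e (i + 1) = f (e i) := by
  obtain ⟨x, hx⟩ := exists_mem_periodicPts f
  have hn : 2 ≤ minimalPeriod f x := by
    have := minimalPeriod_pos_of_mem_periodicPts hx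
    have := (minimalPeriod_eq_one_iff_isFixedPt (f := f) (x := x)).not.mpr (hf x)
    omega
  obtain ⟨m, hm⟩ := Nat.exists_eq_add_of_le' hn
  refine ⟨m, fun i => f^[i] x, fun i j hij => Fin.ext ?_, fun i => ?_⟩
  · exact iterate_injOn_Iio_minimalPeriod (f := f) (by simp [hm]) (by simp [hm]) hij
  · simp only [Fin.val_add, Fin.val_one, ← hm, iterate_mod_minimalPeriod_eq, iterate_succ_apply']

theorem Finset.card_filter_pos_sub_lt {ι : Type*} [Fintype ι] {F G : ι → ℝ}
    (hG : ∀ i, 0 ≤ G i) {i₀ : ι} (hi₀ : 0 < F i₀) (hGi₀ : G i₀ = F i₀) :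
    #{i | 0 < F i - G i} < #{i | 0 < F i} := by
  refine card_lt_card ((ssubset_iff_of_subset ?_).2 ⟨i₀, ?_, ?_⟩)
  · intro i
    simp only [mem_filter, mem_univ, true_and]
    intro hi
    linarith [hG i]
  · simpa using hi₀
  · simp [hGi₀]

section Circulation

variable {E : Type*} [Fintype E]

def IsCirculation (G : E → E → ℝ) : Prop :=
  ∀ z, ∑ x, G x z = ∑ y, G z y

theorem IsCirculation.sub {G H : E → E → ℝ} (hG : IsCirculation G) (hH : IsCirculation H) :
    IsCirculation (G - H) := by
  intro z
  simp only [Pi.sub_apply, sum_sub_distrib, hG z, hH z]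

theorem sum_sum_mul_sub_eq (G : E → E → ℝ) (f : E → ℝ) :
    ∑ x, ∑ y, G x y * (f y - f x) = ∑ z, (∑ x, G x z - ∑ y, G z y) * f z := by
  simp only [mul_sub, sum_sub_distrib, sub_mul, sum_mul]
  rw [sum_comm]

theorem isCirculation_iff_sum_sum_mul_sub_eq_zero [DecidableEq E] (G : E → E → ℝ) :
    IsCirculation G ↔ ∀ f : E → ℝ, ∑ x, ∑ y, G x y * (f y - f x) = 0 := by
  simp only [sum_sum_mul_sub_eq]
  refine ⟨fun hG f => by simp [hG _], fun h z => ?_⟩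
  simpa [sub_eq_zero] using h fun y => if y = z then 1 else 0

theorem IsCirculation.exists_pos_of_pos {F : E → E → ℝ} (hF : IsCirculation F)
    (hF0 : ∀ x y, 0 ≤ F x y) {x y : E} (hyx : 0 < F y x) : ∃ z, 0 < F x z := by
  have hin : 0 < ∑ ξ, F ξ x := hyx.trans_le (single_le_sum (fun ξ _ => hF0 ξ x) (mem_univ y))
  rw [hF x] at hin
  simpa using exists_lt_of_sum_lt (s := univ) (f := fun _ => 0) (g := F x) (by simpa using hin)

theorem IsCirculation.exists_injective_cycle {F : E → E → ℝ} (hF : IsCirculation F)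
    (hF0 : ∀ x y, 0 ≤ F x y) (hFd : ∀ x, F x x = 0) {x₀ y₀ : E} (h₀ : 0 < F x₀ y₀) :
    ∃ (m : ℕ) (e : Fin (m + 2) → E), Injective e ∧ ∀ i, 0 < F (e i) (e (i + 1)) := by
  let S := {x | ∃ y, 0 < F y x}
  have : Nonempty S := ⟨⟨y₀, x₀, h₀⟩⟩
  have hsucc : ∀ x : S, ∃ z : S, 0 < F x z := fun x =>
    let ⟨z, hz⟩ := hF.exists_pos_of_pos hF0 x.2.choose_spec
    ⟨⟨z, x, hz⟩, hz⟩
  choose g hg using hsucc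
  obtain ⟨m, e, he, hsucc⟩ := Function.exists_injective_cycle g fun x hx => by
    simpa [hx, hFd] using hg x
  exact ⟨m, Subtype.val ∘ e, Subtype.val_injective.comp he,
    fun i => by simpa [hsucc] using hg (e i)⟩

end Circulation

section CycleFlow

variable {E : Type*} [DecidableEq E]

def cycleFlow {m : ℕ} (e : Fin (m + 2) → E) (w : ℝ) (x y : E) : ℝ :=
  ∑ i, if x = e i ∧ y = e (i + 1) then w else 0

theorem cycleFlow_apply {m : ℕ} {e : Fin (m + 2) → E} (he : Injective e) (w : ℝ) (x y : E) :
    cycleFlow e w x y = if ∃ i, x = e i ∧ y = e (i + 1) then w else 0 := by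
  split_ifs with h
  · obtain ⟨i, hx, hy⟩ := h
    rw [cycleFlow, sum_eq_single i (fun j _ hji => if_neg fun hj => hji (he (hj.1.symm.trans hx)))
      (by simp)]
    simp [hx, hy]
  · push Not at h
    exact sum_eq_zero fun i _ => if_neg fun hi => h i hi.1 hi.2

theorem cycleFlow_nonneg {m : ℕ} (e : Fin (m + 2) → E) {w : ℝ} (hw : 0 ≤ w) (x y : E) :
    0 ≤ cycleFlow e w x y :=
  sum_nonneg fun _ _ => by split_ifs <;> simp [hw]

theorem cycleFlow_self {m : ℕ} {e : Fin (m + 2) → E} (he : Injective e) (w : ℝ) (x : E) :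
    cycleFlow e w x x = 0 := by
  rw [cycleFlow_apply he, if_neg]
  rintro ⟨i, hx, hx'⟩
  have : (1 : Fin (m + 2)) = 0 := add_eq_left.mp (he (hx'.symm.trans hx))
  simp at this

theorem isCirculation_cycleFlow [Fintype E] {m : ℕ} (e : Fin (m + 2) → E) (w : ℝ) :
    IsCirculation (cycleFlow e w) := by
  intro z
  simp only [cycleFlow]
  rw [sum_comm, sum_comm (γ := E)]
  simp only [ite_and, sum_ite_irrel, sum_ite_eq', mem_univ, if_true, sum_const_zero]
  exact Equiv.sum_comp (Equiv.addRight 1) fun i => if z = e i then w else 0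

theorem exists_cycleFlow_le {m : ℕ} {e : Fin (m + 2) → E} (he : Injective e) {F : E → E → ℝ}
    (hF0 : ∀ x y, 0 ≤ F x y) (hpos : ∀ i, 0 < F (e i) (e (i + 1))) :
    ∃ w, 0 < w ∧ (∀ x y, cycleFlow e w x y ≤ F x y) ∧
      ∃ i, cycleFlow e w (e i) (e (i + 1)) = F (e i) (e (i + 1)) := by
  set w := univ.inf' univ_nonempty fun i => F (e i) (e (i + 1))
  obtain ⟨i, -, hi⟩ := exists_mem_eq_inf' univ_nonempty fun i => F (e i) (e (i + 1))
  refine ⟨w, (lt_inf'_iff _).2 fun i _ => hpos i, fun x y => ?_, i, ?_⟩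
  · rw [cycleFlow_apply he]
    split_ifs with h
    · obtain ⟨j, rfl, rfl⟩ := h
      exact inf'_le _ (mem_univ j)
    · exact hF0 x y
  · rw [cycleFlow_apply he, if_pos ⟨i, rfl, rfl⟩]
    exact hi

end CycleFlow

theorem IsCirculation.exists_eq_sum_cycleFlow {E : Type*} [Fintype E] [DecidableEq E]
    {F : E → E → ℝ} (hF : IsCirculation F) (hF0 : ∀ x y, 0 ≤ F x y) (hFd : ∀ x, F x x = 0) :
    ∃ (p : ℕ) (C : Fin p → E → E → ℝ),
      (∀ j, ∃ (m : ℕ) (e : Fin (m + 2) → E) (w : ℝ), Injective e ∧ 0 < w ∧ C j = cycleFlow e w) ∧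
      ∀ x y, F x y = ∑ j, C j x y := by
  induction hn : #{q : E × E | 0 < F q.1 q.2} using Nat.strong_induction_on generalizing F with
  | _ n ih =>
  by_cases hex : ∃ x y, 0 < F x y
  swap
  · push Not at hex
    exact ⟨0, Fin.elim0, fun j => j.elim0,
      fun x y => by simpa using le_antisymm (hex x y) (hF0 x y)⟩
  obtain ⟨x₀, y₀, h₀⟩ := hex
  obtain ⟨m, e, he, hpos⟩ := hF.exists_injective_cycle hF0 hFd h₀
  obtain ⟨w, hw, hle, i, hi⟩ := exists_cycleFlow_le he hF0 hpos
  have hlt : #{q : E × E | 0 < (F - cycleFlow e w) q.1 q.2} < n := hn ▸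
    card_filter_pos_sub_lt (F := fun q : E × E => F q.1 q.2) (G := fun q => cycleFlow e w q.1 q.2)
      (fun q => cycleFlow_nonneg e hw.le q.1 q.2) (i₀ := (e i, e (i + 1))) (hpos i) hi
  obtain ⟨p, C, hC, hsum⟩ := ih _ hlt (hF.sub (isCirculation_cycleFlow e w))
    (fun x y => sub_nonneg.2 (hle x y)) (fun x => by simp [hFd, cycleFlow_self he]) rfl
  refine ⟨p + 1, Fin.cons (cycleFlow e w) C, Fin.cases ⟨m, e, w, he, hw, rfl⟩ hC, fun x y => ?_⟩
  rw [Fin.sum_univ_succ, Fin.cons_zero]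
  simp only [Fin.cons_succ, ← hsum x y, Pi.sub_apply]
  ring

section MarkovChain

variable {E : Type*}

theorem mul_mcGen_inv_mul [Fintype E] {π : E → ℝ} {x : E} (hx : π x ≠ 0) (G : E → E → ℝ)
    (f : E → ℝ) :
    π x * mcGen (fun x y => (π x)⁻¹ * G x y) f x = ∑ y, G x y * (f y - f x) := by
  simp only [mcGen, mul_sum, ← mul_assoc, mul_inv_cancel₀ hx, one_mul]

variable [DecidableEq E]

def flux (π : E → ℝ) (R : E → E → ℝ) (x y : E) : ℝ :=
  if x = y then 0 else π x * R x y

theorem flux_nonneg {π : E → ℝ} {R : E → E → ℝ} (hπ : ∀ x, 0 ≤ π x)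
    (hR : ∀ x y, x ≠ y → 0 ≤ R x y) (x y : E) : 0 ≤ flux π R x y := by
  unfold flux
  split_ifs with h
  exacts [le_rfl, mul_nonneg (hπ x) (hR x y h)]

theorem flux_self (π : E → ℝ) (R : E → E → ℝ) (x : E) : flux π R x x = 0 :=
  if_pos rfl

theorem isCycleRates_inv_mul_cycleFlow {π : E → ℝ} {m : ℕ} {e : Fin (m + 2) → E}
    (he : Injective e) (hπ : ∀ x, 0 < π x) {w : ℝ} (hw : 0 < w) :
    IsCycleRates fun x y => (π x)⁻¹ * cycleFlow e w x y := by
  refine ⟨m, e, fun i => (π (e i))⁻¹ * w, he, fun i => mul_pos (inv_pos.2 (hπ _)) hw,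
    fun x y => ?_⟩
  simp only [cycleFlow, mul_sum]
  refine sum_congr rfl fun i _ => ?_
  split_ifs with h
  · rw [h.1]
  · exact mul_zero _

variable [Fintype E]

theorem mul_mcGen_eq_sum_flux (π : E → ℝ) (R : E → E → ℝ) (f : E → ℝ) (x : E) :
    π x * mcGen R f x = ∑ y, flux π R x y * (f y - f x) := by
  rw [mcGen, mul_sum]
  refine sum_congr rfl fun y _ => ?_
  by_cases h : x = y <;> simp [flux, h, mul_assoc]

theorem isCirculation_flux {π : E → ℝ} {R : E → E → ℝ}
    (hstat : ∀ f : E → ℝ, ∑ x, π x * mcGen R f x = 0) : IsCirculation (flux π R) :=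
  (isCirculation_iff_sum_sum_mul_sub_eq_zero _).2 fun f => by
    simpa only [mul_mcGen_eq_sum_flux] using hstat f

end MarkovChain

theorem cycle_decomposition_general {E : Type*} [Fintype E] [DecidableEq E]
    (R : E → E → ℝ) (π : E → ℝ)
    (hR : ∀ x y : E, x ≠ y → 0 ≤ R x y)
    (hπpos : ∀ x, 0 < π x)
    (hstat : ∀ f : E → ℝ, ∑ x, π x * mcGen R f x = 0) :
    ∃ (p : ℕ) (Q : Fin p → E → E → ℝ),
      (∀ j, IsCycleRates (Q j)) ∧
      (∀ j, ∀ f : E → ℝ, ∑ x, π x * mcGen (Q j) f x = 0) ∧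
      (∀ f : E → ℝ, ∀ x, mcGen R f x = ∑ j, mcGen (Q j) f x) := by
  obtain ⟨p, C, hC, hsum⟩ := (isCirculation_flux hstat).exists_eq_sum_cycleFlow
    (flux_nonneg (fun x => (hπpos x).le) hR) (flux_self π R)
  refine ⟨p, fun j x y => (π x)⁻¹ * C j x y, fun j => ?_, fun j f => ?_, fun f x => ?_⟩
  · obtain ⟨m, e, w, he, hw, hCj⟩ := hC j
    simpa only [hCj] using isCycleRates_inv_mul_cycleFlow he hπpos hw
  · obtain ⟨m, e, w, -, -, hCj⟩ := hC j
    simp only [mul_mcGen_inv_mul (hπpos _).ne', hCj]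
    exact (isCirculation_iff_sum_sum_mul_sub_eq_zero _).1 (isCirculation_cycleFlow e w) f
  · refine mul_left_cancel₀ (hπpos x).ne' ?_
    simp only [mul_mcGen_eq_sum_flux, hsum, mul_sum, mul_mcGen_inv_mul (hπpos x).ne', sum_mul]
    exact sum_comm

/-- Cycle decomposition: the generator of an irreducible Markov chain on a finite
state space, with unique stationary probability measure `π`, is a finite sum of
cycle generators, each of which is stationary with respect to `π`. -/
theorem cycle_decomposition {E : Type*} [Fintype E] [DecidableEq E]
    (R : E → E → ℝ) (π : E → ℝ)
    (hR : ∀ x y : E, x ≠ y → 0 ≤ R x y)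
    (hirr : ∀ x y : E, Relation.ReflTransGen (fun a b => a ≠ b ∧ 0 < R a b) x y)
    (hπpos : ∀ x, 0 < π x) (hπ1 : ∑ x, π x = 1)
    (hstat : ∀ f : E → ℝ, ∑ x, π x * mcGen R f x = 0) :
    ∃ (p : ℕ) (Q : Fin p → E → E → ℝ),
      (∀ j, IsCycleRates (Q j)) ∧
      (∀ j, ∀ f : E → ℝ, ∑ x, π x * mcGen (Q j) f x = 0) ∧
      (∀ f : E → ℝ, ∀ x, mcGen R f x = ∑ j, mcGen (Q j) f x) :=
  cycle_decomposition_general R π hR hπpos hstat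
end

section
/- For an irreducible Markov chain on finite E with stationary measure π, and disjoint nonempty A, B ⊆ E, the capacity is symmetric with respect to time-reversal: Cap(A,B) = Cap*(B,A), where Cap* is the capacity for the adjoint chain. Explicitly, Σ_{η∈A} π(η)λ(η) P_η[H_B < H_A⁺] = Σ_{ξ∈B} π(ξ)λ(ξ) P*_ξ[H_A < H_B⁺]. -/
open Finset

/-!
Write `L`, `L*` for the generators of the chain and of its adjoint. Stationarity of `π` makes
`L*` the `L²(π)`-adjoint of `L`, so `⟪h*, L h⟫_π = ⟪h, L* h*⟫_π`. Since `h*` is the indicator of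
`B` on `A ∪ B` and `L h` vanishes elsewhere, the left side is `Σ_B π L h`, which by
`Σ_E π L h = 0` equals `-Σ_A π L h = Cap(A,B)`; symmetrically the right side is `Cap*(B,A)`.
-/

section Generator

variable {E : Type*} [Fintype E] (R Rstar : E → E → ℝ) (π : E → ℝ)

theorem mcGen_eq_sum_sub (f : E → ℝ) (x : E) :
    mcGen R f x = ∑ y, R x y * f y - f x * ∑ y, R x y := by
  simp only [mcGen, mul_sub, sum_sub_distrib, sum_mul, mul_comm (f x)]

theorem mcGen_eq_neg_sum_mul_one_sub {f : E → ℝ} {x : E} (hx : f x = 1) :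
    mcGen R f x = -∑ y, R x y * (1 - f y) := by
  simp only [mcGen, hx, ← sum_neg_distrib]
  exact sum_congr rfl fun y _ => by ring

theorem sum_mul_rate_eq_mul_sum_rate (hstat : ∀ f : E → ℝ, ∑ x, π x * mcGen R f x = 0)
    (x : E) : ∑ y, π y * R y x = π x * ∑ y, R x y := by
  classical
  have h := hstat (Pi.single x 1)
  simp only [mcGen_eq_sum_sub, Pi.single_apply, mul_ite, mul_one, mul_zero, sum_ite_eq',
    mem_univ, if_true, ite_mul, zero_mul, one_mul, mul_sub, sum_sub_distrib] at h
  linarith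

variable {R Rstar π}

theorem mul_sum_adjoint_rate (hstat : ∀ f : E → ℝ, ∑ x, π x * mcGen R f x = 0)
    (hadj : ∀ x y : E, π x * Rstar x y = π y * R y x) (x : E) :
    π x * ∑ y, Rstar x y = π x * ∑ y, R x y := by
  rw [mul_sum, ← sum_mul_rate_eq_mul_sum_rate R π hstat]
  exact sum_congr rfl fun y _ => hadj x y

theorem sum_mul_mul_mcGen_eq_adjoint (hstat : ∀ f : E → ℝ, ∑ x, π x * mcGen R f x = 0)
    (hadj : ∀ x y : E, π x * Rstar x y = π y * R y x) (f g : E → ℝ) :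
    ∑ x, π x * g x * mcGen R f x = ∑ x, π x * f x * mcGen Rstar g x := by
  have off_diagonal : ∑ x, π x * f x * ∑ y, Rstar x y * g y
      = ∑ x, π x * g x * ∑ y, R x y * f y := by
    simp only [mul_sum]
    rw [sum_comm]
    refine sum_congr rfl fun x _ => sum_congr rfl fun y _ => ?_
    linear_combination (f y * g x) * hadj y x
  have diagonal : ∀ x, π x * f x * (g x * ∑ y, Rstar x y)
      = π x * g x * (f x * ∑ y, R x y) := fun x => by
    linear_combination (f x * g x) * mul_sum_adjoint_rate hstat hadj x
  simp only [mcGen_eq_sum_sub, mul_sub, sum_sub_distrib, off_diagonal, diagonal]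

theorem sum_mul_mcGen_adjoint_eq_zero (hstat : ∀ f : E → ℝ, ∑ x, π x * mcGen R f x = 0)
    (hadj : ∀ x y : E, π x * Rstar x y = π y * R y x) (g : E → ℝ) :
    ∑ x, π x * mcGen Rstar g x = 0 := by
  have h := sum_mul_mul_mcGen_eq_adjoint hstat hadj (fun _ => 1) g
  simpa [mcGen] using h.symm

variable {A B : Finset E} {f g : E → ℝ}

theorem sum_mul_sum_rate_mul_one_sub (hf : ∀ x ∈ A, f x = 1) :
    ∑ x ∈ A, π x * ∑ y, R x y * (1 - f y) = -∑ x ∈ A, π x * mcGen R f x := by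
  rw [← sum_neg_distrib]
  refine sum_congr rfl fun x hx => ?_
  rw [mcGen_eq_neg_sum_mul_one_sub R (hf x hx)]
  ring

theorem sum_add_sum_mul_mcGen_eq_zero (hstat : ∑ x, π x * mcGen R f x = 0)
    (hAB : Disjoint A B) (hharm : ∀ x, x ∉ A → x ∉ B → mcGen R f x = 0) :
    ∑ x ∈ A, π x * mcGen R f x + ∑ x ∈ B, π x * mcGen R f x = 0 := by
  classical
  rw [← sum_union hAB, sum_subset (subset_univ _) fun x _ hx => ?_, hstat]
  rw [mem_union, not_or] at hx
  rw [hharm x hx.1 hx.2, mul_zero]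

theorem sum_mul_mul_mcGen_eq_sum (hg1 : ∀ x ∈ B, g x = 1) (hg0 : ∀ x ∈ A, g x = 0)
    (hharm : ∀ x, x ∉ A → x ∉ B → mcGen R f x = 0) :
    ∑ x, π x * g x * mcGen R f x = ∑ x ∈ B, π x * mcGen R f x := by
  rw [← sum_subset (subset_univ B) fun x _ hxB => ?_]
  · exact sum_congr rfl fun x hx => by rw [hg1 x hx, mul_one]
  · by_cases hxA : x ∈ A
    · rw [hg0 x hxA, mul_zero, zero_mul]
    · rw [hharm x hxA hxB, mul_zero]

end Generator

/-- Here `h` is the equilibrium potential `h(ξ) = P_ξ[H_A < H_B]` of the chain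
(harmonic off `A ∪ B`, equal to `1` on `A` and `0` on `B`), so that for `η ∈ A`,
`λ(η) P_η[H_B < H_A⁺] = Σ_ξ R(η,ξ)(1 - h(ξ))`; and `hstar` is the equilibrium
potential `P*_ξ[H_B < H_A]` of the adjoint chain with rates `R*` determined by
`π(η)R*(η,ξ) = π(ξ)R(ξ,η)`. -/
theorem capacity_adjoint_symmetry_general {E : Type*} [Fintype E]
    (R Rstar : E → E → ℝ) (π : E → ℝ) (A B : Finset E)
    (hAB : Disjoint A B)
    (hstat : ∀ f : E → ℝ, ∑ x, π x * mcGen R f x = 0)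
    (hadj : ∀ x y : E, π x * Rstar x y = π y * R y x)
    (h hstar : E → ℝ)
    (hh1 : ∀ x ∈ A, h x = 1) (hh0 : ∀ x ∈ B, h x = 0)
    (hharm : ∀ x, x ∉ A → x ∉ B → mcGen R h x = 0)
    (hs1 : ∀ x ∈ B, hstar x = 1) (hs0 : ∀ x ∈ A, hstar x = 0)
    (hsharm : ∀ x, x ∉ A → x ∉ B → mcGen Rstar hstar x = 0) :
    ∑ η ∈ A, π η * ∑ ξ, R η ξ * (1 - h ξ)
      = ∑ ξ ∈ B, π ξ * ∑ ζ, Rstar ξ ζ * (1 - hstar ζ) := by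
  have hB := sum_add_sum_mul_mcGen_eq_zero (hstat h) hAB hharm
  have hA := sum_add_sum_mul_mcGen_eq_zero (sum_mul_mcGen_adjoint_eq_zero hstat hadj hstar) hAB hsharm
  calc ∑ η ∈ A, π η * ∑ ξ, R η ξ * (1 - h ξ)
      = -∑ x ∈ A, π x * mcGen R h x := sum_mul_sum_rate_mul_one_sub hh1
    _ = ∑ x ∈ B, π x * mcGen R h x := by linarith
    _ = ∑ x, π x * hstar x * mcGen R h x := (sum_mul_mul_mcGen_eq_sum hs1 hs0 hharm).symm
    _ = ∑ x, π x * h x * mcGen Rstar hstar x := sum_mul_mul_mcGen_eq_adjoint hstat hadj h hstar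
    _ = ∑ x ∈ A, π x * mcGen Rstar hstar x :=
      sum_mul_mul_mcGen_eq_sum hh1 hh0 fun x hxB hxA => hsharm x hxA hxB
    _ = -∑ x ∈ B, π x * mcGen Rstar hstar x := by linarith
    _ = ∑ ξ ∈ B, π ξ * ∑ ζ, Rstar ξ ζ * (1 - hstar ζ) := (sum_mul_sum_rate_mul_one_sub hs1).symm

/-- Capacity symmetry under time reversal, `Cap(A,B) = Cap*(B,A)`.
Here `h` is the equilibrium potential `h(ξ) = P_ξ[H_A < H_B]` of the chain
(harmonic off `A ∪ B`, equal to `1` on `A` and `0` on `B`), so that for `η ∈ A`,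
`λ(η) P_η[H_B < H_A⁺] = Σ_ξ R(η,ξ)(1 - h(ξ))`; and `hstar` is the equilibrium
potential `P*_ξ[H_B < H_A]` of the adjoint chain with rates `R*` determined by
`π(η)R*(η,ξ) = π(ξ)R(ξ,η)`.  The conclusion states
`Σ_{η∈A} π(η)λ(η)P_η[H_B < H_A⁺] = Σ_{ξ∈B} π(ξ)λ*(ξ)P*_ξ[H_A < H_B⁺]`. -/
theorem capacity_adjoint_symmetry {E : Type*} [Fintype E] [DecidableEq E]
    (R Rstar : E → E → ℝ) (π : E → ℝ) (A B : Finset E)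
    (hAne : A.Nonempty) (hBne : B.Nonempty) (hAB : Disjoint A B)
    (hR : ∀ x y : E, x ≠ y → 0 ≤ R x y) (hπpos : ∀ x, 0 < π x)
    (hstat : ∀ f : E → ℝ, ∑ x, π x * mcGen R f x = 0)
    (hadj : ∀ x y : E, π x * Rstar x y = π y * R y x)
    (h hstar : E → ℝ)
    (hh1 : ∀ x ∈ A, h x = 1) (hh0 : ∀ x ∈ B, h x = 0)
    (hharm : ∀ x, x ∉ A → x ∉ B → mcGen R h x = 0)
    (hs1 : ∀ x ∈ B, hstar x = 1) (hs0 : ∀ x ∈ A, hstar x = 0)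
    (hsharm : ∀ x, x ∉ A → x ∉ B → mcGen Rstar hstar x = 0) :
    ∑ η ∈ A, π η * ∑ ξ, R η ξ * (1 - h ξ)
      = ∑ ξ ∈ B, π ξ * ∑ ζ, Rstar ξ ζ * (1 - hstar ζ) :=
  capacity_adjoint_symmetry_general R Rstar π A B hAB hstat hadj h hstar hh1 hh0 hharm hs1 hs0
    hsharm
end

section
/- Thomson-type principle for reversible chains: for disjoint nonempty A, B ⊆ E, 1/Cap(A,B) = inf over functions f with (Lf)(η) = 0 for all η ∉ A∪B of D(f) / ( Σ_{η∈A} π(η)(Lf)(η) )², with the infimum attained at the equilibrium potential h_{A,B}. -/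
open Finset

/-- Dirichlet form `D(f) = (1/2) Σ_{η,ξ} π(η) R(η,ξ) (f(ξ)-f(η))²`. -/
noncomputable def dForm {E : Type*} [Fintype E] (R : E → E → ℝ) (π : E → ℝ) (f : E → ℝ) : ℝ :=
  (1 / 2) * ∑ η, ∑ ξ, π η * R η ξ * (f ξ - f η) ^ 2

/-!
Since `h = 1` on `A` and `h = 0` on `B`, the summation-by-parts formula
`Σ_η π(η) h(η) (Lf)(η) = -D(h, f)` turns `Σ_{η∈A} π(η) (Lf)(η)` into `-D(h, f)` for every `f`
harmonic off `A ∪ B`. For `f = h` this identifies the capacity with `D(h)`, and the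
Cauchy–Schwarz inequality for the positive semidefinite form `D` gives
`D(h, f)² ≤ D(f) D(h)`, with equality at `f = h`.
-/

lemma mul_sub_sq_nonneg {E : Type*} {R : E → E → ℝ} {π : E → ℝ}
    (hR : ∀ x y : E, x ≠ y → 0 ≤ R x y) (hπ : ∀ x, 0 ≤ π x) (f : E → ℝ) (η ξ : E) :
    0 ≤ π η * R η ξ * (f ξ - f η) ^ 2 := by
  rcases eq_or_ne η ξ with rfl | hne
  · simp
  · exact mul_nonneg (mul_nonneg (hπ η) (hR η ξ hne)) (sq_nonneg _)

section Dirichlet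

variable {E : Type*} [Fintype E] (R : E → E → ℝ) (π : E → ℝ)

noncomputable def dirichletBilin (f g : E → ℝ) : ℝ :=
  (1 / 2) * ∑ η, ∑ ξ, π η * R η ξ * ((f ξ - f η) * (g ξ - g η))

lemma dirichletBilin_self (f : E → ℝ) : dirichletBilin R π f f = dForm R π f := by
  unfold dirichletBilin dForm
  simp only [sq]

lemma sum_mul_mcGen_eq_neg_dirichletBilin (hrev : ∀ x y : E, π x * R x y = π y * R y x)
    (f g : E → ℝ) : ∑ η, π η * f η * mcGen R g η = -dirichletBilin R π f g := by
  have expand : ∑ η, π η * f η * mcGen R g η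
      = ∑ η, ∑ ξ, π η * R η ξ * (f η * (g ξ - g η)) := by
    refine sum_congr rfl fun η _ => ?_
    rw [mcGen, mul_sum]
    exact sum_congr rfl fun ξ _ => by ring
  -- exchanging `η` and `ξ` via reversibility
  have swap : ∑ η, ∑ ξ, π η * R η ξ * (f ξ * (g ξ - g η))
      = -∑ η, ∑ ξ, π η * R η ξ * (f η * (g ξ - g η)) := by
    rw [sum_comm, ← sum_neg_distrib]
    refine sum_congr rfl fun ξ _ => ?_
    rw [← sum_neg_distrib]
    refine sum_congr rfl fun η _ => ?_
    rw [hrev ξ η]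
    ring
  have split : dirichletBilin R π f g
      = (1 / 2) * (∑ η, ∑ ξ, π η * R η ξ * (f ξ * (g ξ - g η))
        - ∑ η, ∑ ξ, π η * R η ξ * (f η * (g ξ - g η))) := by
    simp only [dirichletBilin, ← sum_sub_distrib, ← mul_sub]
    congr 1
    exact sum_congr rfl fun η _ => sum_congr rfl fun ξ _ => by ring
  rw [expand, split, swap]
  ring

variable {R π}

lemma dirichletBilin_sq_le (hR : ∀ x y : E, x ≠ y → 0 ≤ R x y)
    (hπ : ∀ x, 0 ≤ π x) (f g : E → ℝ) :
    dirichletBilin R π f g ^ 2 ≤ dForm R π f * dForm R π g := by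
  have hcs := sum_sq_le_sum_mul_sum_of_sq_le_mul (univ ×ˢ univ : Finset (E × E))
    (r := fun p => π p.1 * R p.1 p.2 * ((f p.2 - f p.1) * (g p.2 - g p.1)))
    (fun p _ => mul_sub_sq_nonneg hR hπ f p.1 p.2)
    (fun p _ => mul_sub_sq_nonneg hR hπ g p.1 p.2) (fun p _ => le_of_eq (by ring))
  simp only [sum_product] at hcs
  unfold dirichletBilin dForm
  calc _ = (1 / 2) ^ 2 * (∑ η, ∑ ξ, π η * R η ξ * ((f ξ - f η) * (g ξ - g η))) ^ 2 := by ring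
    _ ≤ (1 / 2) ^ 2 * ((∑ η, ∑ ξ, π η * R η ξ * (f ξ - f η) ^ 2)
          * ∑ η, ∑ ξ, π η * R η ξ * (g ξ - g η) ^ 2) := by gcongr
    _ = _ := by ring

end Dirichlet

section Capacity

variable {E : Type*} [Fintype E] {R : E → E → ℝ} {π : E → ℝ} {A B : Finset E} {h : E → ℝ}

lemma sum_mul_mcGen_eq_neg_dirichletBilin_of_harmonic
    (hrev : ∀ x y : E, π x * R x y = π y * R y x)
    (hh1 : ∀ x ∈ A, h x = 1) (hh0 : ∀ x ∈ B, h x = 0) {f : E → ℝ}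
    (hf : ∀ x, x ∉ A → x ∉ B → mcGen R f x = 0) :
    ∑ η ∈ A, π η * mcGen R f η = -dirichletBilin R π h f := by
  rw [← sum_mul_mcGen_eq_neg_dirichletBilin R π hrev h f]
  refine (sum_subset (subset_univ A) fun x _ hxA => ?_).symm.trans ?_ |>.symm
  · by_cases hxB : x ∈ B
    · simp [hh0 x hxB]
    · simp [hf x hxA hxB]
  · exact sum_congr rfl fun x hx => by rw [hh1 x hx, mul_one]

lemma capacity_eq_dForm (hrev : ∀ x y : E, π x * R x y = π y * R y x)
    (hh1 : ∀ x ∈ A, h x = 1) (hh0 : ∀ x ∈ B, h x = 0)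
    (hharm : ∀ x, x ∉ A → x ∉ B → mcGen R h x = 0) :
    ∑ η ∈ A, π η * ∑ ξ, R η ξ * (1 - h ξ) = dForm R π h := by
  have hrate : ∀ η ∈ A, π η * ∑ ξ, R η ξ * (1 - h ξ) = -(π η * mcGen R h η) := by
    intro η hη
    rw [mcGen, hh1 η hη, ← mul_neg, ← sum_neg_distrib]
    exact congrArg _ (sum_congr rfl fun ξ _ => by ring)
  rw [sum_congr rfl hrate, sum_neg_distrib,
    sum_mul_mcGen_eq_neg_dirichletBilin_of_harmonic hrev hh1 hh0 hharm, neg_neg,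
    dirichletBilin_self]

end Capacity

/-- The infimum is stated without division, as `(Σ_{η∈A} π(η)(Lf)(η))² ≤ D(f) · Cap(A,B)` with
equality at `h`, where `Cap(A,B) = Σ_{η∈A} π(η) Σ_ξ R(η,ξ)(1 - h(ξ))`. -/
theorem thomson_principle_reversible_general {E : Type*} [Fintype E]
    (R : E → E → ℝ) (π : E → ℝ) (A B : Finset E)
    (hR : ∀ x y : E, x ≠ y → 0 ≤ R x y) (hπpos : ∀ x, 0 < π x)
    (hrev : ∀ x y : E, π x * R x y = π y * R y x)
    (h : E → ℝ)
    (hh1 : ∀ x ∈ A, h x = 1) (hh0 : ∀ x ∈ B, h x = 0)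
    (hharm : ∀ x, x ∉ A → x ∉ B → mcGen R h x = 0) :
    (∀ f : E → ℝ, (∀ x, x ∉ A → x ∉ B → mcGen R f x = 0) →
      (∑ η ∈ A, π η * mcGen R f η) ^ 2
        ≤ dForm R π f * (∑ η ∈ A, π η * ∑ ξ, R η ξ * (1 - h ξ))) ∧
    (∑ η ∈ A, π η * mcGen R h η) ^ 2
        = dForm R π h * (∑ η ∈ A, π η * ∑ ξ, R η ξ * (1 - h ξ)) := by
  rw [capacity_eq_dForm hrev hh1 hh0 hharm]
  refine ⟨fun f hf => ?_, ?_⟩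
  · rw [sum_mul_mcGen_eq_neg_dirichletBilin_of_harmonic hrev hh1 hh0 hf, neg_sq, mul_comm]
    exact dirichletBilin_sq_le hR (fun x => (hπpos x).le) h f
  · rw [sum_mul_mcGen_eq_neg_dirichletBilin_of_harmonic hrev hh1 hh0 hharm, neg_sq,
      dirichletBilin_self, sq]

/-- Thomson-type principle for reversible chains:
`1/Cap(A,B) = inf { D(f) / (Σ_{η∈A} π(η)(Lf)(η))² : (Lf) = 0 off A ∪ B }`,
attained at the equilibrium potential `h`.  Stated without divisions: for every
`f` harmonic off `A ∪ B`, `(Σ_{η∈A} π(η)(Lf)(η))² ≤ D(f) · Cap(A,B)`, with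
equality for `f = h`; here `Cap(A,B) = Σ_{η∈A} π(η) Σ_ξ R(η,ξ)(1-h(ξ))`
`(= Σ_{η∈A} π(η)λ(η)P_η[H_B < H_A⁺])`. -/
theorem thomson_principle_reversible {E : Type*} [Fintype E] [DecidableEq E]
    (R : E → E → ℝ) (π : E → ℝ) (A B : Finset E)
    (hAne : A.Nonempty) (hBne : B.Nonempty) (hAB : Disjoint A B)
    (hR : ∀ x y : E, x ≠ y → 0 ≤ R x y) (hπpos : ∀ x, 0 < π x)
    (hrev : ∀ x y : E, π x * R x y = π y * R y x)
    (hirr : ∀ x y : E, Relation.ReflTransGen (fun a b => a ≠ b ∧ 0 < R a b) x y)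
    (h : E → ℝ)
    (hh1 : ∀ x ∈ A, h x = 1) (hh0 : ∀ x ∈ B, h x = 0)
    (hharm : ∀ x, x ∉ A → x ∉ B → mcGen R h x = 0) :
    (∀ f : E → ℝ, (∀ x, x ∉ A → x ∉ B → mcGen R f x = 0) →
      (∑ η ∈ A, π η * mcGen R f η) ^ 2
        ≤ dForm R π f * (∑ η ∈ A, π η * ∑ ξ, R η ξ * (1 - h ξ))) ∧
    (∑ η ∈ A, π η * mcGen R h η) ^ 2
        = dForm R π h * (∑ η ∈ A, π η * ∑ ξ, R η ξ * (1 - h ξ)) :=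
  thomson_principle_reversible_general R π A B hR hπpos hrev h hh1 hh0 hharm
end

section
/- Collapsing preserves Dirichlet-type bilinear forms: with the collapsed chain as above, for any functions F, G: E → ℝ that are constant on A, and f, g: E_A → ℝ their induced functions on the collapsed space, one has ⟨L^{C,A} f, g⟩_{π^{C,A}} = ⟨L F, G⟩_π. -/
open Finset

/-- The state space `E_A = (E \ A) ∪ {𝔡}` obtained by collapsing `A` to a point
(`none` plays the role of `𝔡`). -/
abbrev CollapsedSpace {E : Type*} [DecidableEq E] (A : Finset E) :=
  Option {x : E // x ∉ A}

/-- Jump rates of the chain obtained by collapsing the set `A` to the point `𝔡`. -/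
noncomputable def collapsedRates {E : Type*} [Fintype E] [DecidableEq E]
    (R : E → E → ℝ) (π : E → ℝ) (A : Finset E) :
    CollapsedSpace A → CollapsedSpace A → ℝ
  | some x, some y => R x y
  | some x, none => ∑ ζ ∈ A, R x ζ
  | none, some y => (∑ ξ ∈ A, π ξ)⁻¹ * ∑ ξ ∈ A, π ξ * R ξ y
  | none, none => 0

/-- The measure `π^{C,A}` on the collapsed space: `π^{C,A}(𝔡) = π(A)` and
`π^{C,A}(η) = π(η)` for `η ∉ A`. -/
noncomputable def collapsedMeasure {E : Type*} [Fintype E] [DecidableEq E]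
    (π : E → ℝ) (A : Finset E) : CollapsedSpace A → ℝ
  | some x => π x
  | none => ∑ ξ ∈ A, π ξ

/-! The states outside `A` keep their outgoing rates, with all jumps into `A` merged into one
jump to `𝔡`, so `L^{C,A} f = L F` off `A`. The rates out of `𝔡` are the `π`-averages over `A`
of the rates out of points of `A`; multiplying by `π^{C,A}(𝔡) = π(A)` cancels the averaging,
and since `F` is constant on `A` the jumps inside `A` contribute nothing to `L F` there. Hence
the `𝔡`-term of the collapsed form is the sum over `A` of the terms of the original form. -/

section Collapse

variable {E : Type*} [Fintype E] [DecidableEq E] {A : Finset E}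

lemma sum_subtype_notMem {M : Type*} [AddCommMonoid M] (h : E → M) :
    ∑ x : {x : E // x ∉ A}, h x = ∑ η ∈ Aᶜ, h η :=
  (sum_subtype Aᶜ (fun _ => mem_compl) h).symm

lemma mcGen_eq_sum_compl_of_mem (R : E → E → ℝ) {F : E → ℝ}
    (hF : ∀ a ∈ A, ∀ b ∈ A, F a = F b) {ξ : E} (hξ : ξ ∈ A) :
    mcGen R F ξ = ∑ η ∈ Aᶜ, R ξ η * (F η - F ξ) := by
  rw [mcGen, ← sum_compl_add_sum A, add_eq_left]
  exact sum_eq_zero fun η hη => by rw [hF η hη ξ hξ, sub_self, mul_zero]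

variable {R : E → E → ℝ} {F : E → ℝ} {f : CollapsedSpace A → ℝ}

lemma mcGen_collapsedRates_some (π : E → ℝ)
    (hfF : ∀ x : {x : E // x ∉ A}, f (some x) = F x) (hfd : ∀ a ∈ A, f none = F a)
    (x : {x : E // x ∉ A}) :
    mcGen (collapsedRates R π A) f (some x) = mcGen R F x := by
  rw [mcGen, mcGen, Fintype.sum_option, ← sum_compl_add_sum A, add_comm]
  congr 1
  · simp only [collapsedRates, hfF]
    exact sum_subtype_notMem fun η => R x η * (F η - F x)
  · simp only [collapsedRates, sum_mul, hfF]
    exact sum_congr rfl fun ξ hξ => by rw [hfd ξ hξ]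

lemma mcGen_collapsedRates_none_mul_collapsedMeasure {π : E → ℝ} (hπA : ∑ ξ ∈ A, π ξ ≠ 0)
    (hfF : ∀ x : {x : E // x ∉ A}, f (some x) = F x) (hfd : ∀ a ∈ A, f none = F a) :
    mcGen (collapsedRates R π A) f none * collapsedMeasure π A none
      = ∑ ξ ∈ A, mcGen R F ξ * π ξ := by
  have hF : ∀ a ∈ A, ∀ b ∈ A, F a = F b := fun a ha b hb => by rw [← hfd a ha, hfd b hb]
  calc mcGen (collapsedRates R π A) f none * collapsedMeasure π A none
      = ∑ η ∈ Aᶜ, (∑ ξ ∈ A, π ξ * R ξ η) * (F η - f none) := by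
        simp only [mcGen, Fintype.sum_option, collapsedRates, collapsedMeasure, zero_mul,
          zero_add, hfF]
        rw [sum_subtype_notMem fun η => (∑ ξ ∈ A, π ξ)⁻¹ * (∑ ξ ∈ A, π ξ * R ξ η) *
          (F η - f none), sum_mul]
        exact sum_congr rfl fun η _ => by field_simp
    _ = ∑ ξ ∈ A, π ξ * ∑ η ∈ Aᶜ, R ξ η * (F η - f none) := by
        simp only [sum_mul, mul_sum]
        rw [sum_comm]
        exact sum_congr rfl fun ξ _ => sum_congr rfl fun η _ => by ring
    _ = ∑ ξ ∈ A, mcGen R F ξ * π ξ :=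
        sum_congr rfl fun ξ hξ => by
          rw [mcGen_eq_sum_compl_of_mem R hF hξ, hfd ξ hξ, mul_comm]

end Collapse

theorem collapsed_bilinear_form_general {E : Type*} [Fintype E] [DecidableEq E]
    (R : E → E → ℝ) (π : E → ℝ) (A : Finset E)
    (hAne : A.Nonempty) (hπpos : ∀ x, 0 < π x)
    (F G : E → ℝ)
    (f g : CollapsedSpace A → ℝ)
    (hfF : ∀ x : {x : E // x ∉ A}, f (some x) = F x)
    (hfd : ∀ a ∈ A, f none = F a)
    (hgG : ∀ x : {x : E // x ∉ A}, g (some x) = G x)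
    (hgd : ∀ a ∈ A, g none = G a) :
    ∑ x : CollapsedSpace A,
        mcGen (collapsedRates R π A) f x * g x * collapsedMeasure π A x
      = ∑ η, mcGen R F η * G η * π η := by
  have hπA : ∑ ξ ∈ A, π ξ ≠ 0 := (sum_pos (fun ξ _ => hπpos ξ) hAne).ne'
  have h𝔡 : mcGen (collapsedRates R π A) f none * g none * collapsedMeasure π A none
      = ∑ η ∈ A, mcGen R F η * G η * π η := by
    rw [mul_right_comm, mcGen_collapsedRates_none_mul_collapsedMeasure hπA hfF hfd, sum_mul]
    exact sum_congr rfl fun η hη => by rw [hgd η hη, mul_right_comm]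
  have hrest : ∑ x : {x : E // x ∉ A},
      mcGen (collapsedRates R π A) f (some x) * g (some x) * collapsedMeasure π A (some x)
      = ∑ η ∈ Aᶜ, mcGen R F η * G η * π η := by
    rw [← sum_subtype_notMem]
    exact Fintype.sum_congr _ _ fun x => by
      rw [mcGen_collapsedRates_some π hfF hfd, hgG]; rfl
  rw [Fintype.sum_option, h𝔡, hrest, add_comm, sum_compl_add_sum]

/-- Collapsing preserves the Dirichlet-type bilinear form: for functions `F`, `G`
on `E` that are constant on `A`, and `f`, `g` the induced functions on the
collapsed space, `⟨L^{C,A} f, g⟩_{π^{C,A}} = ⟨L F, G⟩_π`. -/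
theorem collapsed_bilinear_form {E : Type*} [Fintype E] [DecidableEq E]
    (R : E → E → ℝ) (π : E → ℝ) (A : Finset E)
    (hAne : A.Nonempty) (hπpos : ∀ x, 0 < π x)
    (F G : E → ℝ)
    (hF : ∀ a ∈ A, ∀ b ∈ A, F a = F b) (hG : ∀ a ∈ A, ∀ b ∈ A, G a = G b)
    (f g : CollapsedSpace A → ℝ)
    (hfF : ∀ x : {x : E // x ∉ A}, f (some x) = F x)
    (hfd : ∀ a ∈ A, f none = F a)
    (hgG : ∀ x : {x : E // x ∉ A}, g (some x) = G x)
    (hgd : ∀ a ∈ A, g none = G a) :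
    ∑ x : CollapsedSpace A,
        mcGen (collapsedRates R π A) f x * g x * collapsedMeasure π A x
      = ∑ η, mcGen R F η * G η * π η :=
  collapsed_bilinear_form_general R π A hAne hπpos F G f g hfF hfd hgG hgd
end
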